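/- arXiv:2605.12203 — 2 statements merged into one kernel-verified Lean document; each statement's English description precedes it below -/
import Mathlib

section
/- Let Ψ be an n×n real diagonal matrix whose diagonal entries are all strictly positive, and let N' be an n×n real matrix with xᵀ·N'·x > 0 for every nonzero x ∈ ℝⁿ. Then every eigenvalue λ ∈ ℂ of the product Ψ·N' has strictly positive real part: Re λ > 0. -/
open Matrix

/-- If `Ψ` is a diagonal real matrix with strictly positive diagonal entries
and `N'` satisfies `xᵀ N' x > 0` for every nonzero real `x`, then every complex eigenvalue of
`Ψ · N'` has strictly positive real part. -/
theorem eigenvalues_of_positive_diagonal_scaling_have_positive_real_part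
    (n : ℕ) (d : Fin n → ℝ) (hd : ∀ i, 0 < d i)
    (N' : Matrix (Fin n) (Fin n) ℝ)
    (hN' : ∀ x : Fin n → ℝ, x ≠ 0 → 0 < x ⬝ᵥ (N' *ᵥ x)) :
    ∀ (μ : ℂ) (v : Fin n → ℂ), v ≠ 0 →
      ((Matrix.diagonal d * N').map (Complex.ofReal)) *ᵥ v = μ • v → 0 < μ.re := by
  intro μ v hv h
  classical
  set a : Fin n → ℝ := fun i => (v i).re with ha
  set b : Fin n → ℝ := fun i => (v i).im with hb
  -- componentwise eigenvalue equation
  have hcomp : ∀ i, (d i : ℂ) * ∑ j, (N' i j : ℂ) * v j = μ * v i := by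
    intro i
    have h1 := congrFun h i
    simpa [Matrix.mulVec, dotProduct, Matrix.map_apply, Matrix.diagonal_mul,
      Complex.ofReal_mul, Finset.mul_sum, mul_assoc, Pi.smul_apply, smul_eq_mul] using h1
  set S : ℂ := ∑ i, (starRingEnd ℂ) (v i) * ∑ j, (N' i j : ℂ) * v j with hS
  set t : ℝ := ∑ i, Complex.normSq (v i) / d i with ht
  have hSmu : S = μ * (t : ℂ) := by
    rw [hS, ht]
    push_cast
    rw [Finset.mul_sum]
    refine Finset.sum_congr rfl fun i _ => ?_
    have hdne : (d i : ℂ) ≠ 0 := by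
      exact_mod_cast (hd i).ne'
    have hinner : ∑ j, (N' i j : ℂ) * v j = μ * v i / (d i : ℂ) := by
      field_simp
      rw [mul_comm]
      exact hcomp i
    rw [hinner]
    rw [Complex.normSq_eq_conj_mul_self]
    field_simp
  have htpos : 0 < t := by
    have hne : ∃ i, v i ≠ 0 := by
      by_contra hc
      push_neg at hc
      exact hv (funext hc)
    obtain ⟨i, hi⟩ := hne
    refine Finset.sum_pos' (fun j _ => div_nonneg (Complex.normSq_nonneg _) (hd j).le) ⟨i, Finset.mem_univ i, ?_⟩
    exact div_pos (Complex.normSq_pos.mpr hi) (hd i)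
  have hSre : S.re = a ⬝ᵥ (N' *ᵥ a) + b ⬝ᵥ (N' *ᵥ b) := by
    rw [hS]
    simp only [dotProduct, Matrix.mulVec, Complex.re_sum, Finset.mul_sum,
      Complex.mul_re, Complex.conj_re, Complex.conj_im, Complex.ofReal_re, Complex.ofReal_im]
    rw [← Finset.sum_add_distrib]
    refine Finset.sum_congr rfl fun i _ => ?_
    simp only [Complex.re_sum, Complex.im_sum, Complex.mul_re, Complex.mul_im,
      Complex.ofReal_re, Complex.ofReal_im, Finset.mul_sum, ← Finset.sum_add_distrib,
      Finset.sum_neg_distrib]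
    refine Finset.sum_congr rfl fun j _ => ?_
    simp only [ha, hb]
    ring
  have hquad_nonneg : ∀ x : Fin n → ℝ, 0 ≤ x ⬝ᵥ (N' *ᵥ x) := by
    intro x
    by_cases hx : x = 0
    · simp [hx]
    · exact (hN' x hx).le
  have hab : a ≠ 0 ∨ b ≠ 0 := by
    by_contra hc
    push_neg at hc
    apply hv
    funext i
    have h1 : a i = 0 := by rw [hc.1]; rfl
    have h2 : b i = 0 := by rw [hc.2]; rfl
    exact Complex.ext h1 h2
  have hSrepos : 0 < S.re := by
    rw [hSre]
    rcases hab with hA | hB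
    · exact add_pos_of_pos_of_nonneg (hN' a hA) (hquad_nonneg b)
    · exact add_pos_of_nonneg_of_pos (hquad_nonneg a) (hN' b hB)
  have hfin : μ.re * t = S.re := by
    rw [hSmu]
    simp [Complex.mul_re]
  nlinarith [htpos, hSrepos, hfin]
end

section
/- Let N be an n×n real matrix such that every eigenvalue λ ∈ ℂ of N (viewing N as a complex matrix) has strictly positive real part. Then every eigenvalue μ ∈ ℂ of the matrix exponential exp(−N) satisfies |μ| < 1; that is, the spectral radius of exp(−N) is strictly less than 1. -/
/-!
Since `exp A` commutes with `A`, the complex matrix `A` leaves every eigenspace of `exp A`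
invariant and so has an eigenvector `v` in it. From `A v = λ v` the exponential series gives
`exp A v = e^λ v`, hence every eigenvalue of `exp A` is `e^λ` for an eigenvalue `λ` of `A`.
For `A = -N` this eigenvalue has modulus `e^{-Re λ'}` with `λ' = -λ` an eigenvalue of `N`,
which is `< 1` since `Re λ' > 0`.
-/

open Matrix NormedSpace Module.End

theorem Module.End.exists_hasEigenvector_of_commute {K V : Type*} [Field K] [IsAlgClosed K]
    [AddCommGroup V] [Module K V] [FiniteDimensional K V] {f g : Module.End K V}
    (hfg : Commute f g) {μ : K} (hμ : g.HasEigenvalue μ) :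
    ∃ lam v, f.HasEigenvector lam v ∧ g.HasEigenvector μ v := by
  have hf : ∀ v ∈ g.eigenspace μ, f v ∈ g.eigenspace μ :=
    mapsTo_genEigenspace_of_comm hfg.symm μ 1
  have : Nontrivial (g.eigenspace μ) := Submodule.nontrivial_iff_ne_bot.mpr hμ
  obtain ⟨lam, hlam⟩ := exists_eigenvalue (f.restrict hf)
  obtain ⟨⟨v, hvμ⟩, hv, hv0⟩ := hlam.exists_hasEigenvector
  refine ⟨lam, v, ⟨?_, by simpa using hv0⟩, ⟨hvμ, by simpa using hv0⟩⟩
  exact eigenspace_restrict_le_eigenspace f hf lam ⟨_, hv, rfl⟩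

section MatrixExp

attribute [local instance] Matrix.linftyOpNormedRing Matrix.linftyOpNormedAlgebra

variable {m : Type*} [Fintype m] [DecidableEq m]

theorem Matrix.map_exp {𝔸 𝔹 : Type*} [NormedRing 𝔸] [NormedAlgebra ℚ 𝔸] [CompleteSpace 𝔸]
    [NormedRing 𝔹] [Algebra ℚ 𝔹] (f : 𝔸 →+* 𝔹) (hf : Continuous f)
    (A : Matrix m m 𝔸) : (exp A).map f = exp (A.map f) :=
  -- the operator norm induces the product uniformity, but not reducibly so
  have : @CompleteSpace (Matrix m m 𝔸) PseudoMetricSpace.toUniformSpace :=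
    (inferInstance : CompleteSpace (m → m → 𝔸))
  NormedSpace.map_exp f.mapMatrix (continuous_id.matrix_map hf) A

theorem Matrix.exp_mulVec_of_mulVec_eq_smul {𝕂 : Type*} [RCLike 𝕂] {A : Matrix m m 𝕂}
    {v : m → 𝕂} {lam : 𝕂} (h : A *ᵥ v = lam • v) : exp A *ᵥ v = exp lam • v := by
  have hpow (k : ℕ) : (A ^ k) *ᵥ v = lam ^ k • v := by
    induction k with
    | zero => simp
    | succ k ih => rw [pow_succ, ← mulVec_mulVec, h, mulVec_smul, ih, smul_smul, pow_succ']
  have hA := (exp_series_hasSum_exp' (𝕂 := 𝕂) A).map (mulVec.addMonoidHomLeft v)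
    (continuous_id.matrix_mulVec continuous_const)
  refine hA.unique ?_
  convert (exp_series_hasSum_exp' (𝕂 := 𝕂) lam).smul_const v using 1
  ext k : 1
  change ((k.factorial : 𝕂)⁻¹ • A ^ k) *ᵥ v = _
  rw [smul_mulVec, hpow, smul_smul, smul_eq_mul]

theorem Matrix.spectrum_exp_subset (A : Matrix m m ℂ) :
    spectrum ℂ (exp A) ⊆ Complex.exp '' spectrum ℂ A := by
  intro μ hμ
  rw [← spectrum_toLin', ← hasEigenvalue_iff_mem_spectrum] at hμ
  have hcomm : Commute (toLin' A) (toLin' (exp A)) :=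
    ((Commute.refl A).exp_right).map toLinAlgEquiv'
  obtain ⟨lam, v, hA, hexp⟩ := exists_hasEigenvector_of_commute hcomm hμ
  refine ⟨lam, ?_, ?_⟩
  · rw [← spectrum_toLin', ← hasEigenvalue_iff_mem_spectrum]
    exact hasEigenvalue_of_hasEigenvector hA
  · have h1 := exp_mulVec_of_mulVec_eq_smul (by simpa using hA.apply_eq_smul)
    have h2 : exp A *ᵥ v = μ • v := by simpa using hexp.apply_eq_smul
    rw [h2, ← Complex.exp_eq_exp_ℂ] at h1
    exact smul_left_injective ℂ hexp.2 h1.symm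

end MatrixExp

/-- If every complex eigenvalue of the real matrix `N` has strictly positive
real part, then every complex eigenvalue `μ` of `exp (−N)` satisfies `|μ| < 1`, i.e. the
spectral radius of `exp (−N)` is strictly less than `1`. -/
theorem spectral_radius_exp_neg_lt_one
    (n : ℕ) (N : Matrix (Fin n) (Fin n) ℝ)
    (hN : ∀ lam ∈ spectrum ℂ (N.map (Complex.ofReal)), 0 < lam.re) :
    ∀ μ ∈ spectrum ℂ ((NormedSpace.exp (-N)).map (Complex.ofReal)), ‖μ‖ < 1 := by
  intro μ hμ
  rw [show (Complex.ofReal : ℝ → ℂ) = Complex.ofRealHom from rfl,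
    Matrix.map_exp _ Complex.continuous_ofReal, Matrix.map_neg _ (map_neg _)] at hμ
  obtain ⟨lam, hlam, rfl⟩ := spectrum_exp_subset _ hμ
  have hre : 0 < (-lam).re := hN _ (Set.mem_neg.mp (by rwa [← spectrum.neg_eq] at hlam))
  rw [Complex.norm_exp, Real.exp_lt_one_iff]
  simpa using hre
end
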